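/- arXiv:2409.01732 — 2 statements merged into one kernel-verified Lean document; each statement's English description precedes it below -/
import Mathlib

section
/- If a graph G is a subgraph of P ⊠ H for a path P and a graph H of treewidth t, then for every vertex v of G and every k ≥ 0, the subgraph of G induced by the k-th closed neighborhood N^k[v] has treewidth at most (2k+1)(t+1) − 1. -/
open SimpleGraph

/-- The strong product of two simple graphs. -/
def strongProd {α β : Type*} (G : SimpleGraph α) (H : SimpleGraph β) :
    SimpleGraph (α × β) where
  Adj x y := (x.1 = y.1 ∧ H.Adj x.2 y.2) ∨ (x.2 = y.2 ∧ G.Adj x.1 y.1) ∨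
    (G.Adj x.1 y.1 ∧ H.Adj x.2 y.2)
  symm := by
    constructor
    rintro ⟨a, b⟩ ⟨c, d⟩ (⟨h1, h2⟩ | ⟨h1, h2⟩ | ⟨h1, h2⟩)
    exacts [Or.inl ⟨h1.symm, h2.symm⟩, Or.inr (Or.inl ⟨h1.symm, h2.symm⟩),
      Or.inr (Or.inr ⟨h1.symm, h2.symm⟩)]
  loopless := by
    constructor
    rintro ⟨a, b⟩ (⟨-, h⟩ | ⟨-, h⟩ | ⟨h, -⟩) <;> exact h.ne rfl

/-- Add a new vertex (`none`) to a graph, adjacent exactly to the vertices in `s`. -/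
def addVertex {V : Type} (H : SimpleGraph V) (s : Set V) : SimpleGraph (Option V) where
  Adj x y := match x, y with
    | some a, some b => H.Adj a b
    | some a, none => a ∈ s
    | none, some b => b ∈ s
    | none, none => False
  symm := by
    constructor
    rintro (_ | a) (_ | b) h <;> simp_all
    exact h.symm
  loopless := by
    constructor
    rintro (_ | a) h <;> simp_all

/-- `IsKTree t V H`: the graph `H` on vertex type `V` is a `t`-tree, i.e. it is `K_{t+1}`
or obtained from a smaller `t`-tree by adding a vertex whose neighborhood is a `t`-clique. -/
inductive IsKTree (t : ℕ) : (V : Type) → SimpleGraph V → Prop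
  | base : IsKTree t (Fin (t + 1)) ⊤
  | extend {V : Type} {H : SimpleGraph V} (hH : IsKTree t V H) (s : Finset V)
      (hcard : s.card = t) (hclique : H.IsClique ↑s) :
      IsKTree t (Option V) (addVertex H ↑s)

/-- A graph has treewidth at most `t` if it is a subgraph of some `t`-tree. -/
def HasTreewidthLE {α : Type} (G : SimpleGraph α) (t : ℕ) : Prop :=
  ∃ (V : Type) (H : SimpleGraph V), IsKTree t V H ∧
    ∃ f : α ↪ V, ∀ u v, G.Adj u v → H.Adj (f u) (f v)

/-! Adjacent vertices of `G` lie in equal or consecutive rows of `P ⊠ H`, so `N^k[v]` meets at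
most `n = 2k+1` consecutive rows and embeds in `K_n ⊠ H`, hence in `K_n ⊠ T` for a `t`-tree
`T ⊇ H`. Following the construction of `T`, `K_n ⊠ T` lies in an `(n(t+1)-1)`-tree: when `T` gains
a vertex attached to a `t`-clique `s`, `K_n ⊠ T` gains a clique of `n` vertices attached to the
`nt`-clique `K_n × s`. Such a clique can be added to an `N`-tree one vertex at a time, because
every clique of size at most `N` of an `N`-tree lies in an `N`-clique, to which the new vertex is
attached. -/

variable {α β γ : Type}

theorem hasTreewidthLE_iff {G : SimpleGraph α} {t : ℕ} :
    HasTreewidthLE G t ↔ ∃ (V : Type) (T : SimpleGraph V), IsKTree t V T ∧ G ⊑ T := by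
  refine exists_congr fun V => exists_congr fun T => and_congr_right fun _ => ⟨?_, ?_⟩
  · rintro ⟨f, hf⟩
    exact ⟨⟨⟨f, hf _ _⟩, f.injective⟩⟩
  · rintro ⟨φ⟩
    exact ⟨φ.toEmbedding, fun _ _ => φ.toHom.map_adj⟩

theorem HasTreewidthLE.of_isContained {G : SimpleGraph α} {G' : SimpleGraph β} {t : ℕ}
    (h : HasTreewidthLE G' t) (hGG' : G ⊑ G') : HasTreewidthLE G t := by
  obtain ⟨V, T, hT, hG'T⟩ := hasTreewidthLE_iff.1 h
  exact hasTreewidthLE_iff.2 ⟨V, T, hT, hGG'.trans hG'T⟩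

theorem hasTreewidthLE_of_card_le [Fintype α] (G : SimpleGraph α) {t : ℕ}
    (h : Fintype.card α ≤ t + 1) : HasTreewidthLE G t :=
  hasTreewidthLE_iff.2 ⟨_, _, .base, (IsContained.of_le le_top).trans <|
    isContained_top_iff.2 ⟨(Fintype.equivFin α).toEmbedding.trans (Fin.castLEEmb h)⟩⟩

theorem SimpleGraph.IsClique.finsetMap_copy {G : SimpleGraph α} {W : SimpleGraph β}
    (φ : G.Copy W) {s : Finset α} (hs : G.IsClique s) : W.IsClique (s.map φ.toEmbedding) := by
  rintro _ hx _ hy hne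
  simp only [Finset.coe_map, Set.mem_image, Finset.mem_coe] at hx hy
  obtain ⟨a, ha, rfl⟩ := hx
  obtain ⟨b, hb, rfl⟩ := hy
  exact φ.toHom.map_adj (hs ha hb fun hab => hne (hab ▸ rfl))

theorem isClique_addVertex_map_some {T : SimpleGraph α} {s : Set α} {c : Finset α}
    (hc : T.IsClique c) : (addVertex T s).IsClique (c.map .some) :=
  hc.finsetMap_copy ⟨⟨some, id⟩, Option.some_injective α⟩

namespace IsKTree

variable {t : ℕ} {V : Type} {T : SimpleGraph V}

theorem exists_isNClique_superset (hT : IsKTree t V T) {c : Finset V} (hc : T.IsClique c) :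
    ∃ d : Finset V, c ⊆ d ∧ T.IsNClique (t + 1) d := by
  classical
  induction hT with
  | base => exact ⟨Finset.univ, c.subset_univ, ⟨fun _ _ _ _ => id, by simp⟩⟩
  | @extend V T hT s hcard hs ih =>
    by_cases hnone : none ∈ c
    · refine ⟨insert none (s.map .some), ?_, ?_⟩
      · rintro (_ | a) ha
        · exact Finset.mem_insert_self _ _
        · exact Finset.mem_insert_of_mem (Finset.mem_map_of_mem _ (hc ha hnone (by simp)))
      · rw [← hcard]
        refine IsNClique.insert ⟨?_, Finset.card_map _⟩ ?_
        · exact isClique_addVertex_map_some hs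
        · simp [addVertex]
    · obtain ⟨d, hcd, hd⟩ := ih (c := c.preimage some (Option.some_injective V).injOn)
        fun a ha b hb hab =>
          hc (Finset.mem_preimage.1 ha) (Finset.mem_preimage.1 hb) (by simpa using hab)
      refine ⟨d.map .some, ?_, ?_⟩
      · rintro (_ | a) ha
        · exact absurd ha hnone
        · exact Finset.mem_map_of_mem _ (hcd (Finset.mem_preimage.2 ha))
      · exact ⟨isClique_addVertex_map_some hd.isClique, by rw [Finset.card_map, hd.card_eq]⟩

theorem exists_isNClique_superset_of_card_le (hT : IsKTree t V T) {c : Finset V}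
    (hc : T.IsClique c) {m : ℕ} (hcm : c.card ≤ m) (hm : m ≤ t + 1) :
    ∃ d : Finset V, c ⊆ d ∧ T.IsNClique m d := by
  obtain ⟨d, hcd, hd⟩ := hT.exists_isNClique_superset hc
  obtain ⟨e, hce, hed, he⟩ := Finset.exists_subsuperset_card_eq hcd hcm (hd.card_eq ▸ hm)
  exact ⟨e, hce, hd.isClique.subset (by simpa using hed), he⟩

end IsKTree

theorem addVertex_isContained_addVertex {G : SimpleGraph α} {W : SimpleGraph β} (φ : G.Copy W)
    {s : Set α} {d : Set β} (hsd : ∀ a ∈ s, φ a ∈ d) : addVertex G s ⊑ addVertex W d := by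
  refine ⟨⟨⟨Option.map φ, ?_⟩, Option.map_injective φ.injective⟩⟩
  rintro (_ | a) (_ | b) h
  exacts [h.elim, hsd b h, hsd a h, φ.toHom.map_adj h]

theorem HasTreewidthLE.addVertex {G : SimpleGraph α} {N : ℕ} (h : HasTreewidthLE G N)
    {C : Finset α} (hC : G.IsClique C) (hcard : C.card ≤ N) :
    HasTreewidthLE (addVertex G C) N := by
  obtain ⟨V, W, hW, ⟨φ⟩⟩ := hasTreewidthLE_iff.1 h
  obtain ⟨D, hCD, hD⟩ := hW.exists_isNClique_superset_of_card_le (hC.finsetMap_copy φ)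
    (by rwa [Finset.card_map]) N.le_succ
  exact hasTreewidthLE_iff.2 ⟨_, _, hW.extend D hD.card_eq hD.isClique,
    addVertex_isContained_addVertex φ fun a ha => hCD (Finset.mem_map_of_mem _ ha)⟩

def addClique {α : Type*} (G : SimpleGraph α) (s : Set α) (n : ℕ) : SimpleGraph (α ⊕ Fin n) where
  Adj
    | .inl a, .inl b => G.Adj a b
    | .inl a, .inr _ => a ∈ s
    | .inr _, .inl b => b ∈ s
    | .inr i, .inr j => i ≠ j
  symm := by
    constructor
    rintro (a | i) (b | j) h
    exacts [h.symm, h, h, Ne.symm h]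
  loopless := by
    constructor
    rintro (a | i) h
    exacts [G.loopless.irrefl a h, h rfl]

theorem addClique_zero_isContained (G : SimpleGraph α) (s : Set α) : addClique G s 0 ⊑ G := by
  refine ⟨⟨⟨Sum.elim id Fin.elim0, ?_⟩, ?_⟩⟩
  · rintro (a | i) (b | j) h
    exacts [h, j.elim0, i.elim0, i.elim0]
  · rintro (a | i) (b | j) h
    exacts [congrArg _ h, j.elim0, i.elim0, i.elim0]

theorem addClique_succ_isContained (G : SimpleGraph α) (s : Finset α) (n : ℕ) :
    addClique G s (n + 1) ⊑
      addVertex (addClique G s n) (s.disjSum (.univ : Finset (Fin n)) : Set (α ⊕ Fin n)) := by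
  let φ : α ⊕ Fin (n + 1) → Option (α ⊕ Fin n) :=
    Sum.elim (some ∘ .inl) (Fin.cases none (some ∘ .inr))
  refine ⟨⟨⟨φ, ?_⟩, ?_⟩⟩
  · rintro (a | i) (b | j) h
    · exact h
    · induction j using Fin.cases <;> simpa [φ, addVertex, addClique] using h
    · induction i using Fin.cases <;> simpa [φ, addVertex, addClique] using h
    · induction i using Fin.cases <;> induction j using Fin.cases <;>
        simp_all [φ, addVertex, addClique]
  · rintro (a | i) (b | j) h
    · simpa [φ] using h
    · induction j using Fin.cases <;> simp [φ] at h
    · induction i using Fin.cases <;> simp [φ] at h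
    · induction i using Fin.cases <;> induction j using Fin.cases <;> simp_all [φ]

theorem isClique_addClique_disjSum {G : SimpleGraph α} {s : Finset α} (hs : G.IsClique s)
    (n : ℕ) :
    (addClique G s n).IsClique (s.disjSum (.univ : Finset (Fin n)) : Set (α ⊕ Fin n)) := by
  rintro (a | i) ha (b | j) hb hne
  · exact hs (by simpa using ha) (by simpa using hb) (by simpa using hne)
  · simpa [addClique] using ha
  · simpa [addClique] using hb
  · simpa [addClique] using hne

theorem HasTreewidthLE.addClique {G : SimpleGraph α} {N : ℕ} (h : HasTreewidthLE G N)
    {C : Finset α} (hC : G.IsClique C) {n : ℕ} (hcard : C.card + n ≤ N + 1) :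
    HasTreewidthLE (addClique G C n) N := by
  induction n with
  | zero => exact h.of_isContained (addClique_zero_isContained G C)
  | succ n ih =>
    refine HasTreewidthLE.of_isContained ?_ (addClique_succ_isContained G C n)
    exact (ih (by omega)).addVertex (isClique_addClique_disjSum hC n)
      (by simp only [Finset.card_disjSum, Finset.card_univ, Fintype.card_fin]; omega)

theorem isClique_strongProd {G : SimpleGraph α} {H : SimpleGraph β} {A : Set α} {B : Set β}
    (hA : G.IsClique A) (hB : H.IsClique B) : (strongProd G H).IsClique (A ×ˢ B) := by
  rintro ⟨a, b⟩ ⟨ha, hb⟩ ⟨a', b'⟩ ⟨ha', hb'⟩ hne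
  by_cases hab : a = a'
  · subst hab
    exact Or.inl ⟨rfl, hB hb hb' fun h => hne (Prod.ext rfl h)⟩
  · by_cases hbb : b = b'
    · exact Or.inr (Or.inl ⟨hbb, hA ha ha' hab⟩)
    · exact Or.inr (Or.inr ⟨hA ha ha' hab, hB hb hb' hbb⟩)

theorem SimpleGraph.IsContained.strongProd {δ : Type} {G : SimpleGraph α} {G' : SimpleGraph β}
    {H : SimpleGraph γ} {H' : SimpleGraph δ} (hG : G ⊑ G') (hH : H ⊑ H') :
    strongProd G H ⊑ strongProd G' H' := by
  obtain ⟨φ⟩ := hG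
  obtain ⟨ψ⟩ := hH
  refine ⟨⟨⟨Prod.map φ ψ, ?_⟩, φ.injective.prodMap ψ.injective⟩⟩
  rintro ⟨a, b⟩ ⟨a', b'⟩ (⟨h₁, h₂⟩ | ⟨h₁, h₂⟩ | ⟨h₁, h₂⟩)
  · exact Or.inl ⟨congrArg φ h₁, ψ.toHom.map_adj h₂⟩
  · exact Or.inr (Or.inl ⟨congrArg ψ h₁, φ.toHom.map_adj h₂⟩)
  · exact Or.inr (Or.inr ⟨φ.toHom.map_adj h₁, ψ.toHom.map_adj h₂⟩)

theorem strongProd_addVertex_isContained_addClique {n : ℕ} (T : SimpleGraph α) (s : Set α) :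
    strongProd (⊤ : SimpleGraph (Fin n)) (addVertex T s) ⊑
      addClique (strongProd ⊤ T) ((.univ : Set (Fin n)) ×ˢ s) n := by
  refine ⟨⟨⟨fun x => x.2.elim (.inr x.1) fun a => .inl (x.1, a), ?_⟩, ?_⟩⟩
  · rintro ⟨i, _ | a⟩ ⟨j, _ | b⟩ h <;> simp_all [strongProd, addVertex, addClique] <;> tauto
  · rintro ⟨i, _ | a⟩ ⟨j, _ | b⟩ h <;> simp_all

theorem IsKTree.hasTreewidthLE_strongProd_top {t : ℕ} {V : Type} {T : SimpleGraph V}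
    (hT : IsKTree t V T) (n : ℕ) :
    HasTreewidthLE (strongProd (⊤ : SimpleGraph (Fin n)) T) (n * (t + 1) - 1) := by
  induction hT with
  | base =>
    exact hasTreewidthLE_of_card_le _ (by simp only [Fintype.card_prod, Fintype.card_fin]; omega)
  | @extend V T _ s hcard hs ih =>
    have hclique : (strongProd (⊤ : SimpleGraph (Fin n)) T).IsClique
        ((.univ ×ˢ s : Finset (Fin n × V)) : Set (Fin n × V)) := by
      simpa using isClique_strongProd (isClique_univ.2 rfl) hs
    refine HasTreewidthLE.of_isContained ?_ (strongProd_addVertex_isContained_addClique _ _)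
    simpa using ih.addClique hclique (n := n) (by
      simp only [Finset.card_product, Finset.card_univ, Fintype.card_fin, hcard, mul_add, mul_one]
      omega)

theorem HasTreewidthLE.strongProd_top {H : SimpleGraph α} {t : ℕ} (h : HasTreewidthLE H t)
    (n : ℕ) : HasTreewidthLE (strongProd (⊤ : SimpleGraph (Fin n)) H) (n * (t + 1) - 1) := by
  obtain ⟨V, T, hT, hHT⟩ := hasTreewidthLE_iff.1 h
  exact (hT.hasTreewidthLE_strongProd_top n).of_isContained (IsContained.strongProd .rfl hHT)

theorem fst_le_fst_add_one_of_strongProd_pathGraph_adj {m : ℕ} {H : SimpleGraph β}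
    {x y : Fin m × β} (h : (strongProd (pathGraph m) H).Adj x y) : (x.1 : ℕ) ≤ y.1 + 1 := by
  rcases h with ⟨h, -⟩ | ⟨-, h⟩ | ⟨h, -⟩
  · rw [h]
    omega
  all_goals rw [pathGraph_adj] at h; omega

theorem fst_le_fst_add_length {G : SimpleGraph γ} {m : ℕ} {H : SimpleGraph β}
    (φ : G →g strongProd (pathGraph m) H) {a b : γ} (p : G.Walk a b) :
    ((φ a).1 : ℕ) ≤ (φ b).1 + p.length := by
  induction p with
  | nil => simp
  | cons h _ ih =>
    have := fst_le_fst_add_one_of_strongProd_pathGraph_adj (φ.map_adj h)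
    rw [Walk.length_cons]
    omega

theorem induce_isContained_strongProd_top {G : SimpleGraph γ} {m : ℕ} {P : SimpleGraph (Fin m)}
    {H : SimpleGraph β} (φ : G.Copy (strongProd P H)) {S : Set γ} {r w : ℕ}
    (hS : ∀ u ∈ S, r ≤ ((φ u).1 : ℕ) ∧ ((φ u).1 : ℕ) < r + w) :
    G.induce S ⊑ strongProd (⊤ : SimpleGraph (Fin w)) H := by
  let ψ : S → Fin w × β := fun u => (⟨(φ u).1 - r, by have := hS u u.2; omega⟩, (φ u).2)
  have hrow : ∀ u u' : S, (ψ u).1 = (ψ u').1 ↔ (φ u).1 = (φ u').1 := fun u u' => by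
    have := hS u u.2
    have := hS u' u'.2
    simp only [ψ, Fin.ext_iff]
    omega
  refine ⟨⟨⟨ψ, fun {u u'} h => ?_⟩, fun u u' h => ?_⟩⟩
  · rcases φ.toHom.map_adj h with ⟨h₁, h₂⟩ | ⟨h₁, h₂⟩ | ⟨h₁, h₂⟩
    · exact Or.inl ⟨(hrow u u').2 h₁, h₂⟩
    · exact Or.inr (Or.inl ⟨h₁, (hrow u u').not.2 h₂.ne⟩)
    · exact Or.inr (Or.inr ⟨(hrow u u').not.2 h₁.ne, h₂⟩)
  · change ψ u = ψ u' at h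
    exact Subtype.ext <| φ.injective <|
      Prod.ext ((hrow u u').1 (congrArg Prod.fst h)) (Prod.ext_iff.1 h).2

/-- If `G` is a subgraph of `P ⊠ H` for a path `P` and a graph `H` of treewidth at most
`t`, then for every vertex `v` and every `k ≥ 0` the subgraph of `G` induced by the `k`-th
closed neighborhood of `v` has treewidth at most `(2k+1)(t+1) − 1`. -/
theorem treewidth_closed_neighborhood_of_subgraph_strongProd_path
    {gamma beta : Type} (G : SimpleGraph gamma) (m t : ℕ) (H : SimpleGraph beta)
    (hH : HasTreewidthLE H t)
    (f : gamma ↪ Fin m × beta)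
    (hf : ∀ u v, G.Adj u v → (strongProd (pathGraph m) H).Adj (f u) (f v))
    (v : gamma) (k : ℕ) :
    HasTreewidthLE (G.induce {u | ∃ p : G.Walk v u, p.length ≤ k})
      ((2 * k + 1) * (t + 1) - 1) := by
  let φ : G.Copy (strongProd (pathGraph m) H) := ⟨⟨f, hf _ _⟩, f.injective⟩
  -- if `(f v).1 < k` the window is truncated to start at row `0`, and is still wide enough
  have hrows : ∀ u ∈ {u | ∃ p : G.Walk v u, p.length ≤ k},
      (f v).1 - k ≤ ((f u).1 : ℕ) ∧ ((f u).1 : ℕ) < (f v).1 - k + (2 * k + 1) := by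
    rintro u ⟨p, hp⟩
    have h₁ : ((f v).1 : ℕ) ≤ (f u).1 + p.length := fst_le_fst_add_length φ.toHom p
    have h₂ : ((f u).1 : ℕ) ≤ (f v).1 + p.length :=
      p.length_reverse ▸ fst_le_fst_add_length φ.toHom p.reverse
    omega
  exact (hH.strongProd_top (2 * k + 1)).of_isContained
    (induce_isContained_strongProd_top φ hrows)
end

section
/- Let S(n) denote the sequence defined by S(n) = ‖P_n^{m(n)}‖ where ‖P_n^m‖ = ((m−1)·sin(2π/n) − sin((m−1)·2π/n))/(n·sin(2π/n)) extended appropriately via ‖P_n^m‖ = 1 − ‖P_n^{n−m+2}‖ for m > n/2, and m(n) = n/2+2, ⌈n/2⌉+1, n/2+1, ⌈n/2⌉+2 according to n ≡ 0,1,2,3 (mod 4). Then for n ≡ 2 (mod 4), S(n) = 1/2 exactly, and lim_{n→∞} S(n) = 1/2. -/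
open Real Filter

/-- Raw segment-area fraction `((m−1)·sin θ − sin((m−1)θ))/(n·sin θ)` with `θ = 2π/n`,
valid for `m ≤ n/2 + 1`. -/
noncomputable def segFracRaw (n m : ℕ) : ℝ :=
  (((m : ℝ) - 1) * Real.sin (2 * π / n) - Real.sin (((m : ℝ) - 1) * (2 * π / n)))
    / ((n : ℝ) * Real.sin (2 * π / n))

/-- The fraction `‖P_n^m‖` of the area of a unit-area regular `n`-gon covered by the
convex hull of `m` consecutive corners, extended via `‖P_n^m‖ = 1 − ‖P_n^{n−m+2}‖`. -/
noncomputable def segFrac (n m : ℕ) : ℝ :=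
  if (m : ℝ) ≤ (n : ℝ) / 2 + 1 then segFracRaw n m else 1 - segFracRaw n (n - m + 2)

/-- The threshold value `s(n)` from the paper. -/
noncomputable def sFun (n : ℕ) : ℝ :=
  if n % 4 = 0 then segFrac n (n / 2 + 2)
  else if n % 4 = 1 then segFrac n ((n + 1) / 2 + 1)
  else if n % 4 = 2 then segFrac n (n / 2 + 1)
  else segFrac n ((n + 1) / 2 + 2)

/-!
Write `n = 2a + j` with `j ∈ {0, 1, 2, 3}` chosen by `n mod 4`, so that `s(n) = ‖P_n^{a+j+1}‖`.
Since `a · 2π/n = π - jπ/n`, the segment formula gives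
`s(n) = 1/2 + j/(2n) + sin(jπ/n) / (n sin(2π/n))`, which is exactly `1/2` when `j = 0`.
Jordan's inequality gives `n sin(2π/n) ≥ 4`, so the correction is `O(1/n)`.
-/

lemma sin_two_pi_div_pos {n : ℕ} (hn : 2 < n) : 0 < sin (2 * π / n) := by
  have hn' : (2 : ℝ) < n := by exact_mod_cast hn
  apply sin_pos_of_pos_of_lt_pi (by positivity)
  rw [div_lt_iff₀ (by linarith)]
  nlinarith [pi_pos]

lemma four_le_mul_sin_two_pi_div {n : ℕ} (hn : 4 ≤ n) : 4 ≤ n * sin (2 * π / n) := by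
  have hn' : (4 : ℝ) ≤ n := by exact_mod_cast hn
  have hjordan : 2 / π * (2 * π / n) ≤ sin (2 * π / n) := by
    apply mul_le_sin (by positivity)
    rw [div_le_div_iff₀ (by linarith) two_pos]
    nlinarith [pi_pos]
  calc (4 : ℝ) = n * (2 / π * (2 * π / n)) := by field_simp; norm_num
    _ ≤ n * sin (2 * π / n) := by gcongr

lemma segFracRaw_succ_eq {n a j : ℕ} (hn : 2 < n) (h : 2 * a + j = n) :
    segFracRaw n (a + 1) = a / n - sin (j * π / n) / (n * sin (2 * π / n)) := by
  have hsin := (sin_two_pi_div_pos hn).ne'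
  have hn0 : (n : ℝ) ≠ 0 := by positivity
  have hnR : (n : ℝ) = 2 * a + j := by rw [← h]; push_cast; ring
  have harg : (a : ℝ) * (2 * π / n) = π - j * π / n := by
    field_simp
    linarith
  rw [segFracRaw, Nat.cast_succ, add_sub_cancel_right, harg, sin_pi_sub]
  field_simp

/-- `0 < a` keeps the truncated `n - (a + j + 1)` of the complementary branch honest
(for `n = 3` the definition reads `segFracRaw 3 2`, not `segFracRaw 3 1`). -/
lemma segFrac_add_add_one {n a j : ℕ} (hn : 2 < n) (ha : 0 < a) (h : 2 * a + j = n) :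
    segFrac n (a + j + 1) =
      1 / 2 + (j : ℝ) / (2 * n) + sin (j * π / n) / (n * sin (2 * π / n)) := by
  have hn0 : (n : ℝ) ≠ 0 := by positivity
  have hnR : (n : ℝ) = 2 * a + j := by rw [← h]; push_cast; ring
  have hhalf : (1 : ℝ) / 2 + j / (2 * n) = 1 - a / n := by
    field_simp
    linarith
  rw [segFrac]
  split_ifs with hm
  · obtain rfl : j = 0 := by
      push_cast at hm
      have : (j : ℝ) ≤ 0 := by linarith
      exact_mod_cast this.antisymm (Nat.cast_nonneg j)
    rw [add_zero, segFracRaw_succ_eq hn h]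
    simp only [CharP.cast_eq_zero, zero_mul, zero_div, sin_zero, add_zero, sub_zero] at hhalf ⊢
    linarith
  · rw [show n - (a + j + 1) + 2 = a + 1 by omega, segFracRaw_succ_eq hn h]
    linarith

lemma exists_sFun_eq {n : ℕ} (hn : 4 ≤ n) : ∃ j : ℕ, j ≤ 3 ∧ (n % 4 = 2 → j = 0) ∧
    sFun n = 1 / 2 + (j : ℝ) / (2 * n) + sin (j * π / n) / (n * sin (2 * π / n)) := by
  have hn2 : 2 < n := by omega
  rw [sFun]
  split_ifs with h0 h1 h2
  · refine ⟨2, by norm_num, by omega, ?_⟩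
    rw [show n / 2 + 2 = (n / 2 - 1) + 2 + 1 by omega]
    exact segFrac_add_add_one hn2 (by omega) (by omega)
  · refine ⟨1, by norm_num, by omega, ?_⟩
    rw [show (n + 1) / 2 + 1 = n / 2 + 1 + 1 by omega]
    exact segFrac_add_add_one hn2 (by omega) (by omega)
  · refine ⟨0, by norm_num, fun _ => rfl, ?_⟩
    exact segFrac_add_add_one (a := n / 2) (j := 0) hn2 (by omega) (by omega)
  · refine ⟨3, by norm_num, by omega, ?_⟩
    rw [show (n + 1) / 2 + 2 = (n / 2 - 1) + 3 + 1 by omega]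
    exact segFrac_add_add_one hn2 (by omega) (by omega)

lemma sin_mul_pi_div_div_mem_Icc {n : ℕ} {x : ℝ} (hn : 4 ≤ n) (hx : 0 ≤ x) (hxn : x ≤ n) :
    sin (x * π / n) / (n * sin (2 * π / n)) ∈ Set.Icc 0 (x * π / (4 * n)) := by
  have hn' : (0 : ℝ) < n := by positivity
  have hD := four_le_mul_sin_two_pi_div hn
  have hy0 : 0 ≤ x * π / n := by positivity
  have hsin0 : 0 ≤ sin (x * π / n) := by
    apply sin_nonneg_of_nonneg_of_le_pi hy0
    rw [div_le_iff₀ hn']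
    nlinarith [pi_pos]
  refine ⟨div_nonneg hsin0 (by linarith), ?_⟩
  calc sin (x * π / n) / (n * sin (2 * π / n)) ≤ sin (x * π / n) / 4 := by gcongr
    _ ≤ x * π / n / 4 := by gcongr; exact sin_le hy0
    _ = x * π / (4 * n) := by ring

lemma sFun_mem_Icc {n : ℕ} (hn : 4 ≤ n) : sFun n ∈ Set.Icc (1 / 2 : ℝ) (1 / 2 + 4 / n) := by
  obtain ⟨j, hj3, -, hs⟩ := exists_sFun_eq hn
  have hn' : (4 : ℝ) ≤ n := by exact_mod_cast hn
  have hj : (j : ℝ) ≤ 3 := by exact_mod_cast hj3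
  obtain ⟨hlo, hhi⟩ := sin_mul_pi_div_div_mem_Icc (x := j) hn (by positivity) (by linarith)
  have hsum : j / (2 * n) + j * π / (4 * n) ≤ (4 : ℝ) / n := by
    rw [show j / (2 * n) + j * π / (4 * n) = (j * (2 + π) / 4) / (n : ℝ) by ring]
    gcongr
    nlinarith [pi_lt_d2, pi_pos]
  have hj0 : (0 : ℝ) ≤ j / (2 * n) := by positivity
  rw [hs]
  exact ⟨by linarith, by linarith⟩

/-- For `n ≡ 2 (mod 4)` the threshold `s(n)` equals `1/2` exactly, and
`s(n)` converges to `1/2` as `n → ∞`. -/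
theorem sFun_half_and_tendsto :
    (∀ n : ℕ, 3 ≤ n → n % 4 = 2 → sFun n = 1 / 2) ∧
    Tendsto sFun atTop (nhds (1 / 2)) := by
  refine ⟨fun n hn hmod => ?_, ?_⟩
  · obtain ⟨j, -, hj0, hs⟩ := exists_sFun_eq (by omega : 4 ≤ n)
    simp [hs, hj0 hmod]
  · have hupper : Tendsto (fun n : ℕ => 1 / 2 + 4 / (n : ℝ)) atTop (nhds (1 / 2)) := by
      simpa using tendsto_const_nhds.add (tendsto_const_div_atTop_nhds_zero_nat (4 : ℝ))
    refine tendsto_of_tendsto_of_tendsto_of_le_of_le' tendsto_const_nhds hupper ?_ ?_ <;>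
      filter_upwards [eventually_ge_atTop 4] with n hn
    exacts [(sFun_mem_Icc hn).1, (sFun_mem_Icc hn).2]
end
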